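/- arXiv:1810.12811 — 2 statements merged into one kernel-verified Lean document; each statement's English description precedes it below -/
import Mathlib

section
/- Suppose char(F) ≠ 2 and q is non-degenerate with N = 2n and Witt index n ≥ 2 (anisotropic defect 0), i.e., V is an f_q-orthogonal direct sum of n hyperbolic planes for q. Then for every integer k with 1 ≤ k ≤ n, the Grassmann image G_k(q) equals all of ⋀^k V. -/
/-!
The hyperbolic pairs `e i, f i` of the Witt decomposition span `V`, so `⋀^k V` is spanned by
wedges of `k` distinct vectors among them. Such a wedge is totally singular unless it contains
a whole pair `e i ∧ f i`. For a plane `j ≠ i`,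

  4 • e i ∧ f i = (e i + e j) ∧ (f i - f j) + (e i - e j) ∧ (f i + f j)
                 + (e i + f j) ∧ (f i - e j) + (e i - f j) ∧ (f i + e j),

and each term is the wedge of two orthogonal singular vectors of the planes `i` and `j`; this is
where `char F ≠ 2` enters. A wedge with `p` pairs and `s` further vectors has `2p + s = k ≤ n`,
so there are `p` planes it does not touch, one for each pair. Wedges of totally singular subspaces
of mutually orthogonal sums of planes multiply to such wedges again, so every basis wedge lies in
`G_k(q)`.
-/

noncomputable section

namespace PolarGrass

open Module

variable (F : Type*) [Field F] (V : Type*) [AddCommGroup V] [Module F V]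

/-- A subspace `W` is totally singular for the pairing `B` if `B` vanishes identically on it. -/
def TotSingB (B : V → V → F) (W : Submodule F V) : Prop :=
  ∀ x ∈ W, ∀ y ∈ W, B x y = 0

/-- A subspace `W` is totally singular for the quadratic form `q` if `q` vanishes on it. -/
def TotSingQ (q : QuadraticForm F V) (W : Submodule F V) : Prop :=
  ∀ x ∈ W, q x = 0

/-- The polarization of a quadratic form, as a bare pairing. -/
def polarF (q : QuadraticForm F V) : V → V → F :=
  fun x y => QuadraticMap.polar (⇑q) x y

/-- The subspace of the `k`-th exterior power of `V` spanned by the pure wedges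
`v₁ ∧ ⋯ ∧ v_k` where `v₁, …, v_k` is a basis of a `k`-dimensional subspace satisfying `P`,
all of whose vectors lie in `U`. -/
def grassmannIn (P : Submodule F V → Prop) (U : Submodule F V) (k : ℕ) :
    Submodule F (ExteriorAlgebra F V) :=
  Submodule.span F {x | ∃ v : Fin k → V, (∀ t, v t ∈ U) ∧ LinearIndependent F v ∧
    P (Submodule.span F (Set.range v)) ∧ x = ExteriorAlgebra.ιMulti F k v}

/-- The Grassmann image: the subspace of the `k`-th exterior power of `V` spanned by the
pure wedges of bases of `k`-dimensional subspaces of `V` satisfying `P`. -/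
def grassmann (P : Submodule F V → Prop) (k : ℕ) : Submodule F (ExteriorAlgebra F V) :=
  grassmannIn F V P ⊤ k

/-- `B` is a `σ`-Hermitian form. -/
def IsHermitianForm (σ : F ≃+* F) (B : V → V → F) : Prop :=
  (∀ x y z : V, B (x + y) z = B x z + B y z) ∧
  (∀ x y z : V, B x (y + z) = B x y + B x z) ∧
  (∀ (a b : F) (x y : V), B (a • x) (b • y) = σ a * b * B x y) ∧
  (∀ x y : V, B y x = σ (B x y))

/-- `B` is an alternating bilinear form. -/
def IsAlternatingForm (B : V → V → F) : Prop :=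
  (∀ x y z : V, B (x + y) z = B x z + B y z) ∧
  (∀ x y z : V, B x (y + z) = B x y + B x z) ∧
  (∀ (a : F) (x y : V), B (a • x) y = a * B x y) ∧
  (∀ (a : F) (x y : V), B x (a • y) = a * B x y) ∧
  (∀ x : V, B x x = 0)

/-- `V` is the orthogonal (w.r.t. the pairing `B`) direct sum of the subspaces
`W 0, …, W (n-1), W₀, R`, where each `W i` is a hyperbolic plane (spanned by two singular
vectors pairing to `1`, singularity being measured by `sv`), `W₀` is anisotropic of
dimension `d₀` (it contains no nonzero singular vector) and `R` is the radical
(given as the set `RadSet`) and has dimension `d`. -/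
def IsWittDecomp (B : V → V → F) (sv : V → Prop) (RadSet : Set V) (n d₀ d : ℕ)
    (W : Fin n → Submodule F V) (W₀ R : Submodule F V) : Prop :=
  DirectSum.IsInternal (Sum.elim W ![W₀, R]) ∧
  (∀ j j' : Fin n ⊕ Fin 2, j ≠ j' →
    ∀ x ∈ Sum.elim W ![W₀, R] j, ∀ y ∈ Sum.elim W ![W₀, R] j', B x y = 0) ∧
  (∀ i : Fin n, ∃ e f : V, W i = Submodule.span F {e, f} ∧ sv e ∧ sv f ∧ B e f = 1) ∧
  (∀ v ∈ W₀, v ≠ 0 → ¬ sv v) ∧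
  Module.finrank F W₀ = d₀ ∧
  (R : Set V) = RadSet ∧
  Module.finrank F R = d

/-- There is a Witt decomposition of `V` as above: `B` has reduced Witt index `n`,
anisotropic defect `d₀` and singular defect `d`. -/
def HasWittDecomp (B : V → V → F) (sv : V → Prop) (RadSet : Set V) (n d₀ d : ℕ) : Prop :=
  ∃ (W : Fin n → Submodule F V) (W₀ R : Submodule F V),
    IsWittDecomp F V B sv RadSet n d₀ d W W₀ R

/-- The radical (as a set) of a sesquilinear/bilinear pairing. -/
def radSetB (B : V → V → F) : Set V := {v | ∀ w, B v w = 0}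

/-- The radical (as a set) of a quadratic form. -/
def radSetQ (q : QuadraticForm F V) : Set V :=
  {v | q v = 0 ∧ ∀ w, polarF F V q v w = 0}

/-- The image of `⋀^i U` inside the exterior algebra of `V`: the span of the pure wedges of
`i`-tuples of vectors of `U`. -/
def extPowOf (U : Submodule F V) (i : ℕ) : Submodule F (ExteriorAlgebra F V) :=
  Submodule.span F {x | ∃ v : Fin i → V, (∀ t, v t ∈ U) ∧ x = ExteriorAlgebra.ιMulti F i v}

/-- `Ḡ_j`: for `j ≥ 1` the span of the pure wedges of bases of `j`-dimensional subspaces of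
`U` satisfying `P`; for `j = 0` the scalars `F ⊆ ⋀^0 V`. -/
def gbar (P : Submodule F V → Prop) (U : Submodule F V) : ℕ → Submodule F (ExteriorAlgebra F V)
  | 0 => 1
  | (j + 1) => grassmannIn F V P U (j + 1)

end PolarGrass

theorem ExteriorAlgebra.four_smul_ι_mul_ι {R M : Type*} [CommRing R] [AddCommGroup M] [Module R M]
    (e f u u' : M) :
    (4 : R) • (ι R e * ι R f) = ι R (e + u) * ι R (f - u') + ι R (e - u) * ι R (f + u') +
      ι R (e + u') * ι R (f - u) + ι R (e - u') * ι R (f + u) := by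
  have h := ι_add_mul_swap (R := R) u u'
  rw [ofNat_smul_eq_nsmul (R := R)]
  simp only [map_add, map_sub, add_mul, mul_add, sub_mul, mul_sub]
  linear_combination (norm := noncomm_ring) 2 * h

theorem ExteriorAlgebra.exists_prod_map_ι_eq_smul_ι_mul_erase {R M α : Type*} [CommRing R]
    [AddCommGroup M] [Module R M] [BEq α] [LawfulBEq α] (f : α → M) {l : List α} {x : α}
    (hx : x ∈ l) :
    ∃ ε : R, (l.map fun a => ι R (f a)).prod =
      ε • (ι R (f x) * ((l.erase x).map fun a => ι R (f a)).prod) := by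
  induction l with
  | nil => simp at hx
  | cons y l ih =>
    by_cases hyx : y = x
    · subst hyx
      exact ⟨1, by simp⟩
    · obtain ⟨ε, hε⟩ := ih ((List.mem_cons.mp hx).resolve_left (Ne.symm hyx))
      have hswap : ι R (f y) * ι R (f x) = -(ι R (f x) * ι R (f y)) :=
        eq_neg_of_add_eq_zero_left (ι_add_mul_swap _ _)
      refine ⟨-ε, ?_⟩
      rw [List.erase_cons_tail (by simpa using hyx), List.map_cons, List.prod_cons, hε,
        List.map_cons, List.prod_cons, mul_smul_comm, ← mul_assoc, hswap, neg_mul, mul_assoc,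
        smul_neg, neg_smul]

namespace PolarGrass

open ExteriorAlgebra QuadraticMap

variable {F : Type*} [Field F] {V : Type*} [AddCommGroup V] [Module F V]

theorem exists_mem_ne_forall_ne {α β : Type*} [DecidableEq β] (T : Finset β) (i : β)
    (f : α → β) {l : List α} (h : l.length + 1 < T.card) :
    ∃ j ∈ T, j ≠ i ∧ ∀ y ∈ l, f y ≠ j := by
  obtain ⟨j, hjT, hj⟩ := Finset.exists_mem_notMem_of_card_lt_card
    (s := insert i (l.map f).toFinset) (t := T) <| calc
      (insert i (l.map f).toFinset).card ≤ (l.map f).toFinset.card + 1 :=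
        Finset.card_insert_le _ _
      _ ≤ l.length + 1 := by simpa using (l.map f).toFinset_card_le
      _ < T.card := h
  simp only [Finset.mem_insert, List.mem_toFinset, List.mem_map, not_or, not_exists,
    not_and] at hj
  exact ⟨j, hjT, hj.1, hj.2⟩

theorem fst_ne_of_ne_of_ne {I : Type*} {y : I × Bool} {i : I} {s : Bool} (h : y ≠ (i, s))
    (h' : y ≠ (i, !s)) : y.1 ≠ i := by
  obtain ⟨i', s'⟩ := y
  rintro rfl
  cases s <;> cases s' <;> simp_all

section General

theorem grassmann_le_exteriorPower (P : Submodule F V → Prop) (k : ℕ) :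
    grassmann F V P k ≤ ⋀[F]^k V :=
  Submodule.span_le.mpr fun _ ⟨v, _, _, _, hx⟩ => hx ▸ ιMulti_range F k ⟨v, rfl⟩

theorem grassmannIn_mono (P : Submodule F V → Prop) {U U' : Submodule F V} (h : U ≤ U')
    (k : ℕ) :
    grassmannIn F V P U k ≤ grassmannIn F V P U' k :=
  Submodule.span_mono fun _ ⟨v, hvU, hv⟩ => ⟨v, fun t => h (hvU t), hv⟩

theorem ιMulti_mem_grassmannIn {P : Submodule F V → Prop} {U : Submodule F V} {k : ℕ}
    {v : Fin k → V} (hvU : ∀ t, v t ∈ U) (hP : P (Submodule.span F (Set.range v))) :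
    ιMulti F k v ∈ grassmannIn F V P U k := by
  by_cases hv : LinearIndependent F v
  · exact Submodule.subset_span ⟨v, hvU, hv, hP, rfl⟩
  · rw [(ιMulti F k).map_linearDependent v hv]
    exact Submodule.zero_mem _

theorem one_mem_grassmannIn (q : QuadraticForm F V) (U : Submodule F V) :
    (1 : ExteriorAlgebra F V) ∈ grassmannIn F V (TotSingQ F V q) U 0 := by
  simpa using ιMulti_mem_grassmannIn (P := TotSingQ F V q) (U := U) (v := Fin.elim0)
    (fun t => t.elim0) (by simp [TotSingQ])

variable (q : QuadraticForm F V)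

theorem polar_eq_zero_of_mem_span {s t : Set V}
    (h : ∀ x ∈ s, ∀ y ∈ t, polar q x y = 0) {x y : V}
    (hx : x ∈ Submodule.span F s) (hy : y ∈ Submodule.span F t) : polar q x y = 0 := by
  induction hx, hy using Submodule.span_induction₂ with
  | mem_mem x y hx hy => exact h x hx y hy
  | zero_left => exact polar_zero_left q _
  | zero_right => exact polar_zero_right q _
  | add_left _ _ _ _ _ _ h₁ h₂ => rw [polar_add_left, h₁, h₂, add_zero]
  | add_right _ _ _ _ _ _ h₁ h₂ => rw [polar_add_right, h₁, h₂, add_zero]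
  | smul_left _ _ _ _ _ h => rw [polar_smul_left, h, smul_zero]
  | smul_right _ _ _ _ _ h => rw [polar_smul_right, h, smul_zero]

theorem totSingQ_span_singleton {w : V} (hw : q w = 0) : TotSingQ F V q (F ∙ w) := by
  intro x hx
  obtain ⟨c, rfl⟩ := Submodule.mem_span_singleton.mp hx
  rw [QuadraticMap.map_smul, hw, smul_zero]

theorem totSingQ_sup {W W' : Submodule F V} (hW : TotSingQ F V q W) (hW' : TotSingQ F V q W')
    (horth : ∀ x ∈ W, ∀ y ∈ W', polar q x y = 0) : TotSingQ F V q (W ⊔ W') := by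
  intro z hz
  obtain ⟨x, hx, y, hy, rfl⟩ := Submodule.mem_sup.mp hz
  rw [QuadraticMap.map_add (⇑q), hW x hx, hW' y hy, horth x hx y hy, add_zero, add_zero]

theorem mul_mem_grassmannIn_sup {U U' : Submodule F V}
    (horth : ∀ x ∈ U, ∀ y ∈ U', polar q x y = 0) {a b : ℕ} {x y : ExteriorAlgebra F V}
    (hx : x ∈ grassmannIn F V (TotSingQ F V q) U a)
    (hy : y ∈ grassmannIn F V (TotSingQ F V q) U' b) :
    x * y ∈ grassmannIn F V (TotSingQ F V q) (U ⊔ U') (a + b) := by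
  suffices h : grassmannIn F V (TotSingQ F V q) U a * grassmannIn F V (TotSingQ F V q) U' b ≤
      grassmannIn F V (TotSingQ F V q) (U ⊔ U') (a + b) from h (Submodule.mul_mem_mul hx hy)
  rw [grassmannIn, grassmannIn, Submodule.span_mul_span, Submodule.span_le]
  rintro _ ⟨_, ⟨v, hvU, -, hv, rfl⟩, _, ⟨w, hwU, -, hw, rfl⟩, rfl⟩
  have hrange : Set.range (Fin.append v w) ⊆ Set.range v ∪ Set.range w := by
    rintro _ ⟨t, rfl⟩
    induction t using Fin.addCases with
    | left t => simp
    | right t => simp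
  simp only [SetLike.mem_coe, ιMulti_mul_ιMulti]
  refine ιMulti_mem_grassmannIn (fun t => ?_) fun z hz => ?_
  · induction t using Fin.addCases with
    | left t => simpa using Submodule.mem_sup_left (hvU t)
    | right t => simpa using Submodule.mem_sup_right (hwU t)
  · refine totSingQ_sup q hv hw (fun x hx y hy => polar_eq_zero_of_mem_span q ?_ hx hy) z ?_
    · rintro _ ⟨s, rfl⟩ _ ⟨t, rfl⟩
      exact horth _ (hvU s) _ (hwU t)
    · rw [← Submodule.span_union]
      exact Submodule.span_mono hrange hz

theorem ι_mem_grassmannIn {U : Submodule F V} {w : V} (hwU : w ∈ U) (hw : q w = 0) :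
    ι F w ∈ grassmannIn F V (TotSingQ F V q) U 1 := by
  have h := ιMulti_mem_grassmannIn (P := TotSingQ F V q) (U := U) (v := ![w]) (by simpa using hwU)
    (by simpa using totSingQ_span_singleton q hw)
  simpa [ιMulti_apply] using h

theorem ι_mul_ι_mem_grassmannIn {U : Submodule F V} {w w' : V} (hwU : w ∈ U) (hw'U : w' ∈ U)
    (hw : q w = 0) (hw' : q w' = 0) (hww' : polar q w w' = 0) :
    ι F w * ι F w' ∈ grassmannIn F V (TotSingQ F V q) U 2 := by
  have h := mul_mem_grassmannIn_sup q (U := F ∙ w) (U' := F ∙ w') ?_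
    (ι_mem_grassmannIn q (Submodule.mem_span_singleton_self w) hw)
    (ι_mem_grassmannIn q (Submodule.mem_span_singleton_self w') hw')
  · exact grassmannIn_mono _ (sup_le ((Submodule.span_singleton_le_iff_mem _ _).mpr hwU)
      ((Submodule.span_singleton_le_iff_mem _ _).mpr hw'U)) 2 h
  · refine fun x hx y hy => polar_eq_zero_of_mem_span q ?_ hx hy
    simp [hww']

end General

section Hyperbolic

variable {I : Type*}

structure IsHyperbolicFamily (q : QuadraticForm F V) (g : I × Bool → V) : Prop where
  map_eq_zero : ∀ x, q (g x) = 0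
  polar_eq_zero_of_ne : ∀ x y, x.1 ≠ y.1 → polar q (g x) (g y) = 0
  polar_eq_one : ∀ i s, polar q (g (i, s)) (g (i, !s)) = 1

variable {q : QuadraticForm F V} {g : I × Bool → V}

theorem exists_isHyperbolicFamily_of_hasWittDecomp [FiniteDimensional F V] {RadSet : Set V}
    {n : ℕ} (h : HasWittDecomp F V (polarF F V q) (fun v => q v = 0) RadSet n 0 0) :
    ∃ g : Fin n × Bool → V,
      IsHyperbolicFamily q g ∧ Submodule.span F (Set.range g) = ⊤ := by
  obtain ⟨W, W₀, R, hint, horth, hplanes, -, hW₀, -, hR⟩ := h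
  choose e f hWef he hf hef using hplanes
  let g : Fin n × Bool → V := fun x => cond x.2 (f x.1) (e x.1)
  have hgW : ∀ x, g x ∈ W x.1 := by
    rintro ⟨i, _ | _⟩ <;> exact hWef i ▸ Submodule.subset_span (by simp [g])
  refine ⟨g, ⟨?_, ?_, ?_⟩, ?_⟩
  · rintro ⟨i, _ | _⟩
    exacts [he i, hf i]
  · intro x y hxy
    exact horth (.inl x.1) (.inl y.1) (by simpa using hxy) _ (hgW x) _ (hgW y)
  · rintro i (_ | _)
    exacts [hef i, (polar_comm _ _ _).trans (hef i)]
  · have hsup : ⨆ i, W i = ⊤ := by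
      have htop := hint.submodule_iSup_eq_top
      rw [iSup_sum, Submodule.finrank_eq_zero.mp hW₀, Submodule.finrank_eq_zero.mp hR] at htop
      simpa using htop
    rw [eq_top_iff, ← hsup, iSup_le_iff]
    intro i
    rw [hWef i, Submodule.span_le]
    rintro _ (rfl | rfl)
    exacts [Submodule.subset_span ⟨(i, false), rfl⟩, Submodule.subset_span ⟨(i, true), rfl⟩]

variable (F) in
def planeSpan (g : I × Bool → V) (T : Finset I) : Submodule F V :=
  Submodule.span F (g '' {x | x.1 ∈ T})


theorem mem_planeSpan {T : Finset I} {x : I × Bool} (hx : x.1 ∈ T) : g x ∈ planeSpan F g T :=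
  Submodule.subset_span ⟨x, hx, rfl⟩

theorem planeSpan_mono {S T : Finset I} (h : S ⊆ T) : planeSpan F g S ≤ planeSpan F g T :=
  Submodule.span_mono (Set.image_mono fun _ hx => h hx)

theorem IsHyperbolicFamily.polar_eq_zero_of_disjoint (hg : IsHyperbolicFamily q g)
    {S T : Finset I} (hST : Disjoint S T) {x y : V} (hx : x ∈ planeSpan F g S)
    (hy : y ∈ planeSpan F g T) : polar q x y = 0 := by
  refine polar_eq_zero_of_mem_span q ?_ hx hy
  rintro _ ⟨a, ha, rfl⟩ _ ⟨b, hb, rfl⟩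
  exact hg.polar_eq_zero_of_ne a b fun h => Finset.disjoint_left.mp hST ha (h ▸ hb)

theorem IsHyperbolicFamily.ι_mem_grassmannIn (hg : IsHyperbolicFamily q g) (x : I × Bool) :
    ι F (g x) ∈ grassmannIn F V (TotSingQ F V q) (planeSpan F g {x.1}) 1 :=
  PolarGrass.ι_mem_grassmannIn q (mem_planeSpan (Finset.mem_singleton_self _))
    (hg.map_eq_zero x)

variable [DecidableEq I]

theorem IsHyperbolicFamily.mul_mem_grassmannIn (hg : IsHyperbolicFamily q g) {S T : Finset I}
    (hST : S ⊆ T) {a b : ℕ} {x y : ExteriorAlgebra F V}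
    (hx : x ∈ grassmannIn F V (TotSingQ F V q) (planeSpan F g S) a)
    (hy : y ∈ grassmannIn F V (TotSingQ F V q) (planeSpan F g (T \ S)) b) :
    x * y ∈ grassmannIn F V (TotSingQ F V q) (planeSpan F g T) (a + b) :=
  grassmannIn_mono _ (sup_le (planeSpan_mono hST) (planeSpan_mono Finset.sdiff_subset)) _
    (mul_mem_grassmannIn_sup q (fun _ hx _ hy => hg.polar_eq_zero_of_disjoint
      Finset.disjoint_sdiff hx hy) hx hy)

theorem IsHyperbolicFamily.ι_add_smul_mul_ι_add_smul_mem (hg : IsHyperbolicFamily q g)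
    {i j : I} (hij : i ≠ j) (s t : Bool) {c d : F} (hcd : c * d = -1) :
    ι F (g (i, s) + c • g (j, t)) * ι F (g (i, !s) + d • g (j, !t)) ∈
      grassmannIn F V (TotSingQ F V q) (planeSpan F g {i, j}) 2 := by
  have hi : ∀ s', g (i, s') ∈ planeSpan F g {i, j} := fun _ => mem_planeSpan (by simp)
  have hj : ∀ t', g (j, t') ∈ planeSpan F g {i, j} := fun _ => mem_planeSpan (by simp)
  have hij' : ∀ s' t', polar q (g (i, s')) (g (j, t')) = 0 :=
    fun _ _ => hg.polar_eq_zero_of_ne _ _ hij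
  have hji' : ∀ s' t', polar q (g (j, t')) (g (i, s')) = 0 :=
    fun _ _ => hg.polar_eq_zero_of_ne _ _ hij.symm
  refine PolarGrass.ι_mul_ι_mem_grassmannIn q (add_mem (hi _) (Submodule.smul_mem _ _ (hj _)))
    (add_mem (hi _) (Submodule.smul_mem _ _ (hj _))) ?_ ?_ ?_
  · simp [QuadraticMap.map_add (⇑q), QuadraticMap.map_smul, hg.map_eq_zero, hij']
  · simp [QuadraticMap.map_add (⇑q), QuadraticMap.map_smul, hg.map_eq_zero, hij']
  · simp only [polar_add_left, polar_add_right, polar_smul_left, polar_smul_right, hij', hji',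
      hg.polar_eq_one, smul_eq_mul]
    linear_combination hcd

theorem IsHyperbolicFamily.ι_mul_ι_mem_grassmannIn (hg : IsHyperbolicFamily q g)
    (h2 : (2 : F) ≠ 0) {i j : I} (hij : i ≠ j) (s : Bool) :
    ι F (g (i, s)) * ι F (g (i, !s)) ∈
      grassmannIn F V (TotSingQ F V q) (planeSpan F g {i, j}) 2 := by
  have h4 : (4 : F) ≠ 0 := by
    simpa [show (4 : F) = 2 * 2 by norm_num] using mul_ne_zero h2 h2
  rw [← Submodule.smul_mem_iff _ h4, four_smul_ι_mul_ι _ _ (g (j, s)) (g (j, !s))]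
  have h₁ := hg.ι_add_smul_mul_ι_add_smul_mem hij s s (c := 1) (d := -1) (by ring)
  have h₂ := hg.ι_add_smul_mul_ι_add_smul_mem hij s s (c := -1) (d := 1) (by ring)
  have h₃ := hg.ι_add_smul_mul_ι_add_smul_mem hij s (!s) (c := 1) (d := -1) (by ring)
  have h₄ := hg.ι_add_smul_mul_ι_add_smul_mem hij s (!s) (c := -1) (d := 1) (by ring)
  simp only [one_smul, neg_one_smul, ← sub_eq_add_neg, Bool.not_not] at h₁ h₂ h₃ h₄
  exact add_mem (add_mem (add_mem h₁ h₂) h₃) h₄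

-- `l.length ≤ T.card` leaves, for each hyperbolic pair occurring in `l`, a plane of `T` that `l`
-- does not touch.
theorem IsHyperbolicFamily.list_prod_mem_grassmannIn (hg : IsHyperbolicFamily q g)
    (h2 : (2 : F) ≠ 0) :
    ∀ (l : List (I × Bool)) (T : Finset I), l.Nodup → (∀ x ∈ l, x.1 ∈ T) →
      l.length ≤ T.card →
      (l.map fun x => ι F (g x)).prod ∈
        grassmannIn F V (TotSingQ F V q) (planeSpan F g T) l.length
  | [], _, _, _, _ => one_mem_grassmannIn q _
  | (i, s) :: l, T, hnd, hT, hlen => by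
    obtain ⟨hx, hnd⟩ := List.nodup_cons.mp hnd
    simp only [List.mem_cons, forall_eq_or_imp, List.length_cons] at hT hlen
    by_cases hpartner : (i, !s) ∈ l
    · obtain ⟨ε, hε⟩ := exists_prod_map_ι_eq_smul_ι_mul_erase (R := F) g hpartner
      have hlen' : (l.erase (i, !s)).length + 1 = l.length := List.length_erase_add_one hpartner
      obtain ⟨j, hjT, hji, hj⟩ :=
        exists_mem_ne_forall_ne T i Prod.fst (l := l.erase (i, !s)) (by omega)
      have hijT : {i, j} ⊆ T := Finset.insert_subset hT.1 (Finset.singleton_subset_iff.mpr hjT)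
      have ih := hg.list_prod_mem_grassmannIn h2 (l.erase (i, !s)) (T \ {i, j}) (hnd.erase _)
        (fun y hy => by
          have hyl := List.mem_of_mem_erase hy
          have hyi := fst_ne_of_ne_of_ne (ne_of_mem_of_not_mem hyl hx) (hnd.mem_erase_iff.mp hy).1
          simpa [hT.2 y hyl, hyi] using hj y hy)
        (by rw [Finset.card_sdiff_of_subset hijT, Finset.card_pair hji.symm]; omega)
      have h := hg.mul_mem_grassmannIn hijT (hg.ι_mul_ι_mem_grassmannIn h2 hji.symm s) ih
      rw [List.map_cons, List.prod_cons, hε, mul_smul_comm, ← mul_assoc,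
        show ((i, s) :: l).length = 2 + (l.erase (i, !s)).length by simp; omega]
      exact Submodule.smul_mem _ ε h
    · have ih := hg.list_prod_mem_grassmannIn h2 l (T \ {i}) hnd
        (fun y hy => Finset.mem_sdiff.mpr ⟨hT.2 y hy, by
          simpa using fst_ne_of_ne_of_ne (ne_of_mem_of_not_mem hy hx)
            (ne_of_mem_of_not_mem hy hpartner)⟩)
        (by rw [Finset.card_sdiff_of_subset (Finset.singleton_subset_iff.mpr hT.1)]; simp; omega)
      have h := hg.mul_mem_grassmannIn (Finset.singleton_subset_iff.mpr hT.1)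
        (hg.ι_mem_grassmannIn (i, s)) ih
      rw [List.map_cons, List.prod_cons, List.length_cons, add_comm]
      exact h
termination_by l => l.length

theorem IsHyperbolicFamily.ιMulti_comp_mem_grassmann [Fintype I] (hg : IsHyperbolicFamily q g)
    (h2 : (2 : F) ≠ 0) {k : ℕ} (hk : k ≤ Fintype.card I) (r : Fin k → I × Bool) :
    ιMulti F k (g ∘ r) ∈ grassmann F V (TotSingQ F V q) k := by
  by_cases hr : Function.Injective r
  · have h := hg.list_prod_mem_grassmannIn h2 (List.ofFn r) Finset.univ
      (List.nodup_ofFn.mpr hr) (by simp) (by simpa using hk)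
    rw [List.length_ofFn, List.map_ofFn] at h
    exact grassmannIn_mono _ le_top k h
  · rw [ιMulti_eq_zero_of_not_inj fun h => hr h.of_comp]
    exact Submodule.zero_mem _

end Hyperbolic

end PolarGrass

open PolarGrass Module in
theorem stmt14_general (F : Type*) [Field F] (V : Type*) [AddCommGroup V] [Module F V]
    [FiniteDimensional F V]
    (hchar : ringChar F ≠ 2)
    (q : QuadraticForm F V)
    (n : ℕ)
    (hdec : HasWittDecomp F V (polarF F V q) (fun v => q v = 0) (radSetQ F V q) n 0 0) :
    ∀ k : ℕ, 1 ≤ k → k ≤ n →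
      grassmann F V (TotSingQ F V q) k = ⋀[F]^k V := by
  intro k _ hkn
  obtain ⟨g, hg, hspan⟩ := exists_isHyperbolicFamily_of_hasWittDecomp hdec
  refine le_antisymm (grassmann_le_exteriorPower _ k) ?_
  rw [← exteriorPower.ιMulti_span_fixedDegree_of_span_eq_top F k V hspan, Submodule.span_le]
  rintro _ ⟨v, hv, rfl⟩
  obtain ⟨r, rfl⟩ := Set.range_subset_range_iff_exists_comp.mp hv
  exact hg.ιMulti_comp_mem_grassmann (Ring.two_ne_zero hchar) (by simpa using hkn) r

open PolarGrass Module in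
/-- `char F ≠ 2`, a non-degenerate quadratic form with `N = 2n`, Witt index
`n ≥ 2` (anisotropic defect 0). For `1 ≤ k ≤ n` the Grassmann image is all of `⋀^k V`. -/
theorem stmt14 (F : Type*) [Field F] (V : Type*) [AddCommGroup V] [Module F V]
    [FiniteDimensional F V]
    (hchar : ringChar F ≠ 2)
    (q : QuadraticForm F V)
    (hndeg : ∀ v : V, q v = 0 → (∀ w : V, polarF F V q v w = 0) → v = 0)
    (n : ℕ) (hn : 2 ≤ n)
    (hdec : HasWittDecomp F V (polarF F V q) (fun v => q v = 0) (radSetQ F V q) n 0 0)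
    (hNV : Module.finrank F V = 2 * n) :
    ∀ k : ℕ, 1 ≤ k → k ≤ n →
      grassmann F V (TotSingQ F V q) k = ⋀[F]^k V :=
  stmt14_general F V hchar q n hdec
end
end

section
/- Suppose char(F) = 2 and q is non-degenerate with Witt index n ≥ 2 and non-degenerate polarization f_q (i.e., d'₀ = dim Rad(f_q) = 0, so N = 2n + 2m for some m ≥ 0 and V is an f_q-orthogonal direct sum V = V₁ ⊕ ⋯ ⊕ Vₙ ⊕ V₀ with each Vᵢ a hyperbolic plane for q and V₀ anisotropic of dimension 2m). Then for every integer k with 1 ≤ k ≤ n, the Grassmann image G_k(q) coincides with the symplectic Grassmann image S_k(f_q). -/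
noncomputable section

/-!
The inclusion `G_k(q) ⊆ S_k(f_q)` is immediate. Conversely, take a pure wedge `v₁ ∧ ⋯ ∧ v_k` of
a totally `f_q`-isotropic subspace with `q vᵢ ≠ 0` for some `i`, and put `H = ⟨vⱼ : j ≠ i⟩`.
If `e` is singular, orthogonal to `H`, and `f_q(vᵢ, e) = q vᵢ`, then `vᵢ - e` and `e` are
singular, and linearity in the `i`-th slot writes the wedge as the sum of the two wedges with
`vᵢ` replaced by `vᵢ - e` and by `e`; both have fewer non-singular entries, so induction on their
number concludes.

Such an `e` exists because `dim H < k ≤ n`. First there is a singular `e₁ ∈ H^⊥ ∖ H`: if `H`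
contains no nonzero singular vector, take `e₁ ≠ 0` in `S ∩ H^⊥` for a totally singular `S` of
dimension `n`, which is nonzero as `dim S + dim H^⊥ > dim V`; otherwise project along a singular
`s ∈ H` onto `t^⊥`, where `f_q(s, t) = 1`, and induct on `dim H`. Then every `u ∈ H^⊥` with
`f_q(e₁, u) ≠ 0` is the difference of the singular vectors `u + c e₁` and `c e₁` of `H^⊥`, so the
singular vectors of `H^⊥` span it; as `vᵢ ∉ H = H^⊥⊥`, one of them pairs nontrivially with `vᵢ`.
-/

open Module QuadraticMap Submodule LinearMap.BilinForm

section LinearAlgebra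

variable {F : Type*} [Field F] {V : Type*} [AddCommGroup V] [Module F V]

lemma LinearIndependent.update_of_apply_ne_zero {ι : Type*} [Fintype ι] [DecidableEq ι]
    {v : ι → V} (hv : LinearIndependent F v) {i : ι} {w : V} (φ : V →ₗ[F] F) (hw : φ w ≠ 0)
    (hφv : ∀ j ≠ i, φ (v j) = 0) : LinearIndependent F (Function.update v i w) := by
  rw [Fintype.linearIndependent_iff] at hv ⊢
  intro g hg
  have hgi : g i = 0 := by
    have h0 := congrArg φ hg
    rw [map_sum, Finset.sum_eq_single i (fun j _ hj => by simp [hj, hφv j hj]) (by simp),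
      map_zero, Function.update_self, map_smul, smul_eq_mul] at h0
    exact (mul_eq_zero.mp h0).resolve_right hw
  have hg' : ∑ j, g j • v j = 0 := by
    rw [← hg]
    refine Finset.sum_congr rfl fun j _ => ?_
    rcases eq_or_ne j i with rfl | hj
    · simp [hgi]
    · rw [Function.update_of_ne hj]
  intro j
  rcases eq_or_ne j i with rfl | _
  · exact hgi
  · exact hv g hg' j

lemma Finset.card_filter_update_lt {ι α : Type*} [Fintype ι] [DecidableEq ι] (p : α → Prop)
    [DecidablePred p] (f : ι → α) {i : ι} (hi : p (f i)) {a : α} (ha : ¬ p a) :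
    (Finset.univ.filter fun j => p (Function.update f i a j)).card <
      (Finset.univ.filter fun j => p (f j)).card := by
  refine Finset.card_lt_card ⟨fun j hj => ?_, fun hsub => ?_⟩
  · simp only [Finset.mem_filter, Finset.mem_univ, true_and] at hj ⊢
    rcases eq_or_ne j i with rfl | hji
    · rw [Function.update_self] at hj
      exact absurd hj ha
    · rwa [Function.update_of_ne hji] at hj
  · have := hsub (Finset.mem_filter.2 ⟨Finset.mem_univ i, hi⟩)
    simp [ha] at this

lemma Submodule.finrank_map_add_finrank_inf_ker [FiniteDimensional F V] {V' : Type*}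
    [AddCommGroup V'] [Module F V'] (f : V →ₗ[F] V') (W : Submodule F V) :
    finrank F (W.map f) + finrank F ↥(W ⊓ LinearMap.ker f) = finrank F W := by
  have hmap : W.map f = LinearMap.range (f ∘ₗ W.subtype) := by
    rw [LinearMap.range_comp, range_subtype]
  have hker : finrank F (LinearMap.ker (f ∘ₗ W.subtype)) = finrank F ↥(W ⊓ LinearMap.ker f) := by
    rw [LinearMap.ker_comp, ← finrank_map_subtype_eq, map_comap_subtype]
  rw [hmap, ← hker]
  exact LinearMap.finrank_range_add_finrank_ker _

lemma Submodule.finrank_le_finrank_inf_ker_add_one [FiniteDimensional F V] (W : Submodule F V)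
    (φ : V →ₗ[F] F) : finrank F W ≤ finrank F ↥(W ⊓ LinearMap.ker φ) + 1 := by
  have := finrank_map_add_finrank_inf_ker φ W
  have : finrank F (W.map φ) ≤ 1 := (finrank_self F).symm ▸ (W.map φ).finrank_le
  omega

lemma Submodule.le_span_setOf_apply_ne_zero {M : Type*} [AddCommGroup M] [Module F M]
    {W : Submodule F V} (φ : V →ₗ[F] M) {u₀ : V} (hu₀ : u₀ ∈ W) (h : φ u₀ ≠ 0) :
    W ≤ span F {u | u ∈ W ∧ φ u ≠ 0} := by
  intro u hu
  by_cases hφu : φ u = 0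
  · rw [← add_sub_cancel_right u u₀]
    refine sub_mem (subset_span ⟨add_mem hu hu₀, ?_⟩) (subset_span ⟨hu₀, h⟩)
    rwa [map_add, hφu, zero_add]
  · exact subset_span ⟨hu, hφu⟩

end LinearAlgebra

namespace PolarGrass

variable {F : Type*} [Field F] {V : Type*} [AddCommGroup V] [Module F V] (q : QuadraticForm F V)

lemma grassmann_mono {P Q : Submodule F V → Prop} (h : ∀ W, P W → Q W) (k : ℕ) :
    grassmann F V P k ≤ grassmann F V Q k :=
  span_mono fun _ ⟨v, hvU, hv, hP, hx⟩ => ⟨v, hvU, hv, h _ hP, hx⟩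

@[simp] lemma polarF_apply (x y : V) : polarF F V q x y = polarBilin q x y := rfl

lemma polarBilin_comm (x y : V) : polarBilin q x y = polarBilin q y x := polar_comm q x y

lemma polarBilin_isRefl : (polarBilin q).IsRefl := fun x y h => by rwa [polarBilin_comm]

lemma polarBilin_self_eq_zero {x : V} (hx : q x = 0) : polarBilin q x x = 0 := by
  simp [polar_self, hx]

lemma map_add_smul_eq (x y : V) (c : F) :
    q (x + c • y) = q x + c * c * q y + c * polarBilin q x y := by
  rw [QuadraticMap.map_add (⇑q), QuadraticMap.map_smul, polarBilin_apply_apply, polar_smul_right,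
    smul_eq_mul, smul_eq_mul]

lemma map_sub_eq (x y : V) : q (x - y) = q x + q y - polarBilin q x y := by
  simpa [sub_eq_add_neg] using map_add_smul_eq q x y (-1)

lemma TotSingQ.totSingB {W : Submodule F V} (hW : TotSingQ F V q W) :
    TotSingB F V (polarF F V q) W := fun x hx y hy => by
  simp [polar, hW x hx, hW y hy, hW _ (add_mem hx hy)]

lemma totSingB_span {s : Set V} (hs : ∀ x ∈ s, ∀ y ∈ s, polarBilin q x y = 0) :
    TotSingB F V (polarF F V q) (span F s) := by
  intro x hx y hy
  have hy' : ∀ a ∈ s, polarBilin q a y = 0 := fun a ha =>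
    (span_le (p := LinearMap.ker (polarBilin q a))).2 (hs a ha) hy
  exact (span_le (p := LinearMap.ker ((polarBilin q).flip y))).2 hy' hx

lemma totSingQ_span {s : Set V} (hq : ∀ x ∈ s, q x = 0)
    (hs : ∀ x ∈ s, ∀ y ∈ s, polarBilin q x y = 0) : TotSingQ F V q (span F s) := by
  intro x hx
  induction hx using span_induction with
  | mem x hx => exact hq x hx
  | zero => simp
  | add x y hx hy ihx ihy =>
    rw [QuadraticMap.map_add (⇑q), ihx, ihy, ← polarF, totSingB_span q hs x hx y hy]
    simp
  | smul a x _ ih => simp [QuadraticMap.map_smul, ih]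

lemma exists_polarBilin_eq_one (hnd : (polarBilin q).SeparatingLeft) {s : V} (hs : s ≠ 0) :
    ∃ t, polarBilin q s t = 1 := by
  obtain ⟨w, hw⟩ : ∃ w, polarBilin q s w ≠ 0 := by
    by_contra! h
    exact hs (hnd s h)
  exact ⟨(polarBilin q s w)⁻¹ • w, by rw [map_smul, smul_eq_mul, inv_mul_cancel₀ hw]⟩

section ProjAlong

variable {s t : V}

/-- When `q s = 0` and `polarBilin q s t = 1`, this is the projection onto the orthogonal of `t`
with kernel `F ∙ s`. -/
def projAlong (s t : V) : V →ₗ[F] V :=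
  LinearMap.id - ((polarBilin q).flip t).smulRight s

lemma projAlong_apply (v : V) : projAlong q s t v = v - polarBilin q v t • s := rfl

lemma mem_span_singleton_of_projAlong_eq_zero {v : V} (hv : projAlong q s t v = 0) :
    v ∈ F ∙ s := by
  rw [projAlong_apply, sub_eq_zero] at hv
  exact hv ▸ smul_mem _ _ (mem_span_singleton_self s)

lemma projAlong_self (hst : polarBilin q s t = 1) : projAlong q s t s = 0 := by
  rw [projAlong_apply, hst, one_smul, sub_self]

lemma polarBilin_projAlong_right (hst : polarBilin q s t = 1) (v : V) :
    polarBilin q (projAlong q s t v) t = 0 := by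
  rw [projAlong_apply, map_sub, map_smul, LinearMap.sub_apply, LinearMap.smul_apply, hst,
    smul_eq_mul, mul_one, sub_self]

lemma polarBilin_projAlong_left (hqs : q s = 0) (v : V) :
    polarBilin q (projAlong q s t v) s = polarBilin q v s := by
  rw [projAlong_apply, map_sub, map_smul, LinearMap.sub_apply, LinearMap.smul_apply,
    polarBilin_self_eq_zero q hqs, smul_zero, sub_zero]

lemma polarBilin_projAlong_projAlong (hqs : q s = 0) {a b : V} (ha : polarBilin q a s = 0)
    (hb : polarBilin q b s = 0) :
    polarBilin q (projAlong q s t a) (projAlong q s t b) = polarBilin q a b := by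
  rw [projAlong_apply q a, map_sub, map_smul, LinearMap.sub_apply, LinearMap.smul_apply,
    polarBilin_comm q s, polarBilin_projAlong_left q hqs, hb, smul_zero, sub_zero,
    projAlong_apply, map_sub, map_smul, ha, smul_zero, sub_zero]

lemma map_projAlong (hqs : q s = 0) {v : V} (hv : polarBilin q v s = 0) :
    q (projAlong q s t v) = q v := by
  rw [projAlong_apply, map_sub_eq, QuadraticMap.map_smul, hqs, map_smul, hv]
  simp

end ProjAlong

section IsotropicExtension

variable {s t : V} {H S : Submodule F V}

lemma totSingB_map_projAlong (hqs : q s = 0) (hH : TotSingB F V (polarF F V q) H) (hsH : s ∈ H) :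
    TotSingB F V (polarF F V q) (H.map (projAlong q s t)) := by
  rintro _ ⟨a, ha, rfl⟩ _ ⟨b, hb, rfl⟩
  rw [polarF_apply, polarBilin_projAlong_projAlong q hqs (hH a ha s hsH) (hH b hb s hsH)]
  exact hH a ha b hb

lemma totSingQ_map_projAlong (hqs : q s = 0) (hS : TotSingQ F V q S) :
    TotSingQ F V q ((S ⊓ LinearMap.ker (polarBilin q s)).map (projAlong q s t)) := by
  rintro _ ⟨v, ⟨hvS, hvs⟩, rfl⟩
  rw [map_projAlong q hqs (by rwa [polarBilin_comm]), hS v hvS]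

lemma exists_of_map_projAlong (hqs : q s = 0) (hst : polarBilin q s t = 1)
    (hH : TotSingB F V (polarF F V q) H) (hsH : s ∈ H)
    (h : ∃ e ∈ (S ⊓ LinearMap.ker (polarBilin q s)).map (projAlong q s t) ⊔ H.map (projAlong q s t),
      q e = 0 ∧ e ∈ orthogonal (polarBilin q) (H.map (projAlong q s t)) ∧
        e ∉ H.map (projAlong q s t)) :
    ∃ e ∈ S ⊔ H, q e = 0 ∧ e ∈ orthogonal (polarBilin q) H ∧ e ∉ H := by
  obtain ⟨e, he, hqe, heH, he_notMem⟩ := h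
  rw [← Submodule.map_sup] at he
  obtain ⟨w, hw, rfl⟩ := he
  have hws : polarBilin q w s = 0 := by
    have hle : S ⊓ LinearMap.ker (polarBilin q s) ⊔ H ≤ LinearMap.ker (polarBilin q s) :=
      sup_le inf_le_right fun h hh => hH s hsH h hh
    rw [polarBilin_comm]
    exact hle hw
  have hes : polarBilin q (projAlong q s t w) s = 0 :=
    (polarBilin_projAlong_left q hqs w).trans hws
  refine ⟨projAlong q s t w, ?_, hqe, mem_orthogonal_iff.2 fun h hh => ?_, fun hmem => ?_⟩
  · rw [projAlong_apply]
    exact sub_mem (sup_le_sup_right inf_le_left H hw) (smul_mem _ _ (mem_sup_right hsH))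
  · have := mem_orthogonal_iff.1 heH _ (mem_map_of_mem (f := projAlong q s t) hh)
    rwa [projAlong_apply q h, map_sub, map_smul, LinearMap.sub_apply, LinearMap.smul_apply,
      polarBilin_comm q s, hes, smul_zero, sub_zero] at this
  · have hfix : projAlong q s t (projAlong q s t w) = projAlong q s t w := by
      rw [projAlong_apply _ (projAlong q s t w), polarBilin_projAlong_right q hst, zero_smul,
        sub_zero]
    exact he_notMem (hfix ▸ mem_map_of_mem hmem)

variable [FiniteDimensional F V]

lemma finrank_map_projAlong_lt (hst : polarBilin q s t = 1) (hs : s ≠ 0) (hsH : s ∈ H) :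
    finrank F (H.map (projAlong q s t)) < finrank F H := by
  have hker : 0 < finrank F ↥(H ⊓ LinearMap.ker (projAlong q s t)) :=
    one_le_finrank_iff.2 <| (Submodule.ne_bot_iff _).2 ⟨s, ⟨hsH, projAlong_self q hst⟩, hs⟩
  have := finrank_map_add_finrank_inf_ker (projAlong q s t) H
  omega

lemma finrank_le_finrank_map_projAlong_add_one (hS : TotSingQ F V q S) :
    finrank F S ≤ finrank F ((S ⊓ LinearMap.ker (polarBilin q s)).map (projAlong q s t)) + 1 := by
  set U := S ⊓ LinearMap.ker (polarBilin q s)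
  have hrank := finrank_map_add_finrank_inf_ker (projAlong q s t) U
  have hker_le : U ⊓ LinearMap.ker (projAlong q s t) ≤ S ⊓ (F ∙ s) := fun v ⟨⟨hvS, _⟩, hv⟩ =>
    ⟨hvS, mem_span_singleton_of_projAlong_eq_zero q hv⟩
  by_cases hsS : s ∈ S
  · have hUS : U = S := inf_eq_left.2 fun v hv => hS.totSingB q s hsS v hv
    have : finrank F ↥(U ⊓ LinearMap.ker (projAlong q s t)) ≤ 1 :=
      (finrank_mono (hker_le.trans inf_le_right)).trans ((finrank_span_le_card {s}).trans
        (by simp))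
    rw [hUS] at hrank this ⊢
    omega
  · have hSs : S ⊓ (F ∙ s) = ⊥ := by
      refine eq_bot_iff.2 fun v ⟨hvS, hvs⟩ => ?_
      obtain ⟨c, rfl⟩ := mem_span_singleton.1 hvs
      by_cases hc : c = 0
      · simp [hc]
      · exact absurd ((smul_mem_iff S hc).1 hvS) hsS
    have hker : U ⊓ LinearMap.ker (projAlong q s t) = ⊥ := le_bot_iff.1 (hSs ▸ hker_le)
    rw [hker, finrank_bot] at hrank
    have : finrank F S ≤ finrank F U + 1 := finrank_le_finrank_inf_ker_add_one S _
    omega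

lemma exists_mem_inf_orthogonal_ne_zero {B : LinearMap.BilinForm F V} (hB : B.Nondegenerate)
    (hlt : finrank F H < finrank F S) : ∃ e ∈ S ⊓ orthogonal B H, e ≠ 0 := by
  have := finrank_sup_add_finrank_inf_eq S (orthogonal B H)
  have := finrank_orthogonal hB H
  have := (S ⊔ orthogonal B H).finrank_le
  have := H.finrank_le
  exact exists_mem_ne_zero_of_ne_bot (one_le_finrank_iff.1 (by omega))

/-- The clause `e ∈ S ⊔ H` is what lets the induction on `dim H` go through: it makes the vector
found for the projected pair orthogonal to `s` and `t`. -/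
theorem exists_map_eq_zero_mem_orthogonal_notMem (hnd : (polarBilin q).Nondegenerate)
    (hH : TotSingB F V (polarF F V q) H) (hS : TotSingQ F V q S)
    (hlt : finrank F H < finrank F S) :
    ∃ e ∈ S ⊔ H, q e = 0 ∧ e ∈ orthogonal (polarBilin q) H ∧ e ∉ H := by
  induction hd : finrank F H using Nat.strong_induction_on generalizing H S with
  | _ d ih =>
  by_cases hsing : ∃ s ∈ H, q s = 0 ∧ s ≠ 0
  · obtain ⟨s, hsH, hqs, hs⟩ := hsing
    obtain ⟨t, hst⟩ := exists_polarBilin_eq_one q hnd.1 hs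
    have hH' := finrank_map_projAlong_lt q hst hs hsH
    have hS' := finrank_le_finrank_map_projAlong_add_one q (s := s) (t := t) hS
    exact exists_of_map_projAlong q hqs hst hH hsH <| ih _ (hd ▸ hH')
      (totSingB_map_projAlong q hqs hH hsH) (totSingQ_map_projAlong q hqs hS) (by omega) rfl
  · push Not at hsing
    obtain ⟨e, ⟨heS, heH⟩, he⟩ := exists_mem_inf_orthogonal_ne_zero hnd hlt
    exact ⟨e, mem_sup_left heS, hS e heS, heH, fun h => he (hsing e h (hS e heS))⟩

lemma orthogonal_le_span_setOf_map_eq_zero (hnd : (polarBilin q).Nondegenerate) {e₁ : V}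
    (hqe : q e₁ = 0) (heH : e₁ ∈ orthogonal (polarBilin q) H) (he : e₁ ∉ H) :
    orthogonal (polarBilin q) H ≤ span F {e | e ∈ orthogonal (polarBilin q) H ∧ q e = 0} := by
  rw [← orthogonal_orthogonal hnd (polarBilin_isRefl q) H, mem_orthogonal_iff] at he
  push Not at he
  obtain ⟨u₀, hu₀, hne⟩ := he
  rw [polarBilin_comm] at hne
  refine (le_span_setOf_apply_ne_zero _ hu₀ hne).trans (span_le.2 ?_)
  rintro u ⟨hu, hue⟩
  set c := -(q u / polarBilin q e₁ u)
  have hq : q (u + c • e₁) = 0 := by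
    rw [map_add_smul_eq, hqe, mul_zero, add_zero, polarBilin_comm q u, neg_mul,
      div_mul_cancel₀ _ hue, add_neg_cancel]
  rw [← add_sub_cancel_right u (c • e₁)]
  exact sub_mem (subset_span ⟨add_mem hu (smul_mem _ _ heH), hq⟩)
    (smul_mem _ _ (subset_span ⟨heH, hqe⟩))

lemma exists_map_eq_zero_mem_orthogonal_polarBilin_ne_zero (hnd : (polarBilin q).Nondegenerate)
    (hH : TotSingB F V (polarF F V q) H) (hS : TotSingQ F V q S)
    (hlt : finrank F H < finrank F S) {x : V} (hx : x ∉ H) :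
    ∃ e, q e = 0 ∧ e ∈ orthogonal (polarBilin q) H ∧ polarBilin q x e ≠ 0 := by
  obtain ⟨e₁, -, hqe₁, he₁H, he₁⟩ := exists_map_eq_zero_mem_orthogonal_notMem q hnd hH hS hlt
  by_contra! h
  refine hx ?_
  rw [← orthogonal_orthogonal hnd (polarBilin_isRefl q) H, mem_orthogonal_iff]
  intro u hu
  have hle : span F {e | e ∈ orthogonal (polarBilin q) H ∧ q e = 0} ≤
      LinearMap.ker (polarBilin q x) :=
    span_le.2 fun e ⟨heH, hqe⟩ => h e hqe heH
  rw [polarBilin_comm]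
  exact hle (orthogonal_le_span_setOf_map_eq_zero q hnd hqe₁ he₁H he₁ hu)

end IsotropicExtension

section Grassmann

lemma totSingB_span_range_update {ι : Type*} [DecidableEq ι] {v : ι → V}
    (hv : TotSingB F V (polarF F V q) (span F (Set.range v))) {i : ι} {w : V} (hw : q w = 0)
    (hwv : ∀ j ≠ i, polarBilin q w (v j) = 0) :
    TotSingB F V (polarF F V q) (span F (Set.range (Function.update v i w))) := by
  refine totSingB_span q ?_
  rintro _ ⟨a, rfl⟩ _ ⟨b, rfl⟩
  simp only [Function.update_apply]
  split_ifs with ha hb hb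
  · exact polarBilin_self_eq_zero q hw
  · exact hwv b hb
  · rw [polarBilin_comm]
    exact hwv a ha
  · exact hv _ (subset_span ⟨a, rfl⟩) _ (subset_span ⟨b, rfl⟩)

variable [FiniteDimensional F V]

lemma exists_map_eq_zero_polarBilin_eq (hnd : (polarBilin q).Nondegenerate) {S : Submodule F V}
    (hS : TotSingQ F V q S) {k : ℕ} (hk : k ≤ finrank F S) {v : Fin k → V}
    (hli : LinearIndependent F v) (hv : TotSingB F V (polarF F V q) (span F (Set.range v)))
    (i : Fin k) :
    ∃ e, q e = 0 ∧ (∀ j ≠ i, polarBilin q e (v j) = 0) ∧ polarBilin q (v i) e = q (v i) := by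
  set H := span F (v '' {i}ᶜ)
  have hHv : H ≤ span F (Set.range v) := span_mono (Set.image_subset_range _ _)
  have hvi : v i ∉ H := hli.notMem_span_image (by simp)
  have hlt : finrank F H < finrank F S := by
    have := finrank_lt_finrank_of_lt <|
      lt_of_le_of_ne hHv fun h => hvi (h ▸ subset_span ⟨i, rfl⟩)
    rw [finrank_span_eq_card hli, Fintype.card_fin] at this
    omega
  obtain ⟨e, hqe, heH, hne⟩ := exists_map_eq_zero_mem_orthogonal_polarBilin_ne_zero q hnd
    (fun x hx y hy => hv x (hHv hx) y (hHv hy)) hS hlt hvi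
  refine ⟨(q (v i) / polarBilin q (v i) e) • e, ?_, fun j hj => ?_, ?_⟩
  · rw [QuadraticMap.map_smul, hqe, smul_zero]
  · rw [map_smul, LinearMap.smul_apply, polarBilin_comm q e,
      mem_orthogonal_iff.1 heH _ (subset_span ⟨j, hj, rfl⟩), smul_zero]
  · rw [map_smul, smul_eq_mul, div_mul_cancel₀ _ hne]

theorem ιMulti_mem_grassmann_totSingQ (hnd : (polarBilin q).Nondegenerate) {S : Submodule F V}
    (hS : TotSingQ F V q S) {k : ℕ} (hk : k ≤ finrank F S) (v : Fin k → V)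
    (hli : LinearIndependent F v) (hv : TotSingB F V (polarF F V q) (span F (Set.range v))) :
    ExteriorAlgebra.ιMulti F k v ∈ grassmann F V (TotSingQ F V q) k := by
  classical
  induction hr : (Finset.univ.filter fun t => q (v t) ≠ 0).card
    using Nat.strong_induction_on generalizing v with
  | _ r ih =>
  have hvv : ∀ a b, polarBilin q (v a) (v b) = 0 := fun a b =>
    hv _ (subset_span ⟨a, rfl⟩) _ (subset_span ⟨b, rfl⟩)
  by_cases hsing : ∀ t, q (v t) = 0
  · refine subset_span ⟨v, fun _ => mem_top, hli, totSingQ_span q ?_ ?_, rfl⟩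
    · rintro _ ⟨t, rfl⟩
      exact hsing t
    · rintro _ ⟨a, rfl⟩ _ ⟨b, rfl⟩
      exact hvv a b
  push Not at hsing
  obtain ⟨i, hi⟩ := hsing
  have hupdate : ∀ w, q w = 0 → (∀ j ≠ i, polarBilin q w (v j) = 0) →
      polarBilin q (v i) w ≠ 0 →
      ExteriorAlgebra.ιMulti F k (Function.update v i w) ∈ grassmann F V (TotSingQ F V q) k :=
    fun w hw hwv hvw =>
      ih _ (hr ▸ Finset.card_filter_update_lt (fun x => q x ≠ 0) v hi (not_not.2 hw)) _
        (hli.update_of_apply_ne_zero _ hvw fun j _ => hvv i j)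
        (totSingB_span_range_update q hv hw hwv) rfl
  obtain ⟨e, hqe, hev, hve⟩ := exists_map_eq_zero_polarBilin_eq q hnd hS hk hli hv i
  have hsplit : ExteriorAlgebra.ιMulti F k v = ExteriorAlgebra.ιMulti F k
      (Function.update v i (v i - e)) + ExteriorAlgebra.ιMulti F k (Function.update v i e) := by
    rw [AlternatingMap.map_update_sub, Function.update_eq_self, sub_add_cancel]
  rw [hsplit]
  refine add_mem (hupdate _ ?_ (fun j hj => ?_) ?_) (hupdate e hqe hev (hve ▸ hi))
  · rw [map_sub_eq, hqe, hve]
    ring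
  · rw [map_sub, LinearMap.sub_apply, hvv, hev j hj, sub_zero]
  · rwa [map_sub, hvv, hve, zero_sub, neg_ne_zero]

end Grassmann

lemma HasWittDecomp.exists_totSingQ_finrank_eq {R : Set V} {n d₀ d : ℕ}
    (h : HasWittDecomp F V (polarF F V q) (fun v => q v = 0) R n d₀ d) :
    ∃ S, TotSingQ F V q S ∧ finrank F S = n := by
  obtain ⟨W, W₀, Rad, hInt, hOrth, hHyp, -⟩ := h
  choose e f hWef hqe _ hef using hHyp
  have heW : ∀ i, e i ∈ W i := fun i => hWef i ▸ subset_span (by simp)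
  have he0 : ∀ i, e i ≠ 0 := fun i h0 => by simpa [h0] using hef i
  have hindep : iSupIndep W := by simpa using hInt.submodule_iSupIndep.comp Sum.inl_injective
  have hli := hindep.linearIndependent W heW he0
  refine ⟨span F (Set.range e), totSingQ_span q ?_ ?_, by
    rw [finrank_span_eq_card hli, Fintype.card_fin]⟩
  · rintro _ ⟨i, rfl⟩
    exact hqe i
  · rintro _ ⟨i, rfl⟩ _ ⟨j, rfl⟩
    rcases eq_or_ne i j with rfl | hij
    · exact polarBilin_self_eq_zero q (hqe i)
    · exact hOrth (.inl i) (.inl j) (by simpa) _ (heW i) _ (heW j)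

end PolarGrass

open PolarGrass Module in
theorem stmt17_general (F : Type*) [Field F] (V : Type*) [AddCommGroup V] [Module F V]
    [FiniteDimensional F V]
    (q : QuadraticForm F V)
    (hfq : ∀ v : V, (∀ w : V, polarF F V q v w = 0) → v = 0)
    (n m : ℕ)
    (hdec : HasWittDecomp F V (polarF F V q) (fun v => q v = 0) (radSetQ F V q) n (2 * m) 0) :
    ∀ k : ℕ, 1 ≤ k → k ≤ n →
      grassmann F V (TotSingQ F V q) k = grassmann F V (TotSingB F V (polarF F V q)) k := by
  intro k _ hkn
  have hnd : (QuadraticMap.polarBilin q).Nondegenerate :=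
    (polarBilin_isRefl q).nondegenerate_iff_separatingLeft.2 hfq
  obtain ⟨S, hS, rfl⟩ := hdec.exists_totSingQ_finrank_eq q
  refine le_antisymm (grassmann_mono (fun _ => TotSingQ.totSingB q) k) (Submodule.span_le.2 ?_)
  rintro _ ⟨v, -, hli, hv, rfl⟩
  exact ιMulti_mem_grassmann_totSingQ q hnd hS hkn v hli hv

open PolarGrass Module in
/-- `char F = 2`, a non-degenerate quadratic form with Witt index `n ≥ 2`
and non-degenerate polarization `f_q` (so `N = 2n + 2m` and the anisotropic part has
dimension `2m`). For `1 ≤ k ≤ n` the Grassmann image coincides with the symplectic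
Grassmann image of `f_q`. -/
theorem stmt17 (F : Type*) [Field F] (V : Type*) [AddCommGroup V] [Module F V]
    [FiniteDimensional F V]
    (hchar : ringChar F = 2)
    (q : QuadraticForm F V)
    (hndeg : ∀ v : V, q v = 0 → (∀ w : V, polarF F V q v w = 0) → v = 0)
    (hfq : ∀ v : V, (∀ w : V, polarF F V q v w = 0) → v = 0)
    (n m : ℕ) (hn : 2 ≤ n)
    (hdec : HasWittDecomp F V (polarF F V q) (fun v => q v = 0) (radSetQ F V q) n (2 * m) 0)
    (hNV : Module.finrank F V = 2 * n + 2 * m) :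
    ∀ k : ℕ, 1 ≤ k → k ≤ n →
      grassmann F V (TotSingQ F V q) k = grassmann F V (TotSingB F V (polarF F V q)) k :=
  stmt17_general F V q hfq n m hdec
end
end
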